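/- Let d ≥ 1, let μ be a probability measure on ℝ^d with finite fourth moment, let B = ∫ xxᵀ dμ(x), and suppose β ≥ 1 satisfies (∫|⟨x,v⟩|⁴ dμ(x))^{1/4} ≤ β (∫|⟨x,v⟩|² dμ(x))^{1/2} for all v ∈ ℝ^d. Then ‖B‖_F² ≤ λ₁(T_μ) ≤ (Σ_{i=1}^{d(d+1)/2} λ_i(T_μ)²)^{1/2} ≤ β⁴ ‖B‖_F². -/

import Mathlib

open MeasureTheory
open scoped ENNReal RealInnerProductSpace Classical

noncomputable section

/-- The outer product `x xᵀ` of a vector in Euclidean space, as a matrix. -/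
def outer {d : ℕ} (x : EuclideanSpace ℝ (Fin d)) : Matrix (Fin d) (Fin d) ℝ :=
  Matrix.of fun i j => x i * x j

/-- The trace inner product `⟨A, B⟩ = Tr (A B)` on symmetric matrices. -/
def minner {d : ℕ} (A B : Matrix (Fin d) (Fin d) ℝ) : ℝ :=
  Matrix.trace (A * B)

/-- The Frobenius norm of a matrix. -/
def frobNorm {d : ℕ} (M : Matrix (Fin d) (Fin d) ℝ) : ℝ :=
  Real.sqrt (∑ i, ∑ j, (M i j) ^ 2)

/-- Entrywise integral of a matrix-valued function. -/
def mIntegral {d : ℕ} (μ : Measure (EuclideanSpace ℝ (Fin d)))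
    (F : EuclideanSpace ℝ (Fin d) → Matrix (Fin d) (Fin d) ℝ) :
    Matrix (Fin d) (Fin d) ℝ :=
  Matrix.of fun i j => ∫ x, F x i j ∂μ

/-- The fourth moment operator `T_μ (A) = ∫ ⟨A, xxᵀ⟩ xxᵀ dμ(x)`. -/
def fourthMomentOp {d : ℕ} (μ : Measure (EuclideanSpace ℝ (Fin d)))
    (A : Matrix (Fin d) (Fin d) ℝ) : Matrix (Fin d) (Fin d) ℝ :=
  mIntegral μ (fun x => minner A (outer x) • outer x)

/-- The second moment matrix `B = ∫ xxᵀ dμ(x)`. -/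
def secondMoment {d : ℕ} (μ : Measure (EuclideanSpace ℝ (Fin d))) :
    Matrix (Fin d) (Fin d) ℝ :=
  mIntegral μ outer

/-- `lam : ℕ → ℝ` lists the eigenvalues (with multiplicity) of the fourth moment operator
`T_μ`, viewed as an operator on the `d(d+1)/2`-dimensional inner product space of symmetric
matrices, in descending order, padded by `0` beyond index `d(d+1)/2`. -/
def IsEigenSeq {d : ℕ} (μ : Measure (EuclideanSpace ℝ (Fin d))) (lam : ℕ → ℝ) : Prop :=
  Antitone lam ∧ (∀ i, d * (d + 1) / 2 ≤ i → lam i = 0) ∧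
  ∃ b : Fin (d * (d + 1) / 2) → Matrix (Fin d) (Fin d) ℝ,
    (∀ i, (b i).IsSymm) ∧
    (∀ i j, minner (b i) (b j) = if i = j then 1 else 0) ∧
    (∀ A : Matrix (Fin d) (Fin d) ℝ, A.IsSymm → A ∈ Submodule.span ℝ (Set.range b)) ∧
    (∀ i : Fin (d * (d + 1) / 2), fourthMomentOp μ (b i) = lam i • b i)

/-- The second order separation parameter `s(μ)`. -/
def sep {d : ℕ} (μ : Measure (EuclideanSpace ℝ (Fin d))) : ℝ :=
  (1 / 2) * sSup { r : ℝ | ∃ μ₁ μ₂ : Measure (EuclideanSpace ℝ (Fin d)),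
    IsProbabilityMeasure μ₁ ∧ IsProbabilityMeasure μ₂ ∧
    μ = (2 : ℝ≥0∞)⁻¹ • μ₁ + (2 : ℝ≥0∞)⁻¹ • μ₂ ∧
    r = frobNorm (secondMoment μ₁ - secondMoment μ₂) }

/-- The standard Gaussian measure `N(0, I)` on `ℝ^d`. -/
def stdGaussian (d : ℕ) : Measure (EuclideanSpace ℝ (Fin d)) :=
  (Measure.pi fun _ : Fin d => ProbabilityTheory.gaussianReal 0 1).map
    (MeasurableEquiv.toLp 2 (Fin d → ℝ))

/-- The square root of a positive semidefinite matrix, as defined in the older Mathlib. -/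
def Matrix.PosSemidef.sqrt {n : Type*} [Fintype n] [DecidableEq n]
    {A : Matrix n n ℝ} (hA : A.PosSemidef) : Matrix n n ℝ :=
  hA.1.eigenvectorUnitary.1 * Matrix.diagonal (Real.sqrt ∘ hA.1.eigenvalues) *
    (star hA.1.eigenvectorUnitary : Matrix n n ℝ)

/-- The centered Gaussian measure `N(0, B)` on `ℝ^d` with positive semidefinite
covariance matrix `B`, obtained as the pushforward of `N(0, I)` by `B^{1/2}`. -/
def gaussianCov {d : ℕ} (B : Matrix (Fin d) (Fin d) ℝ) :
    Measure (EuclideanSpace ℝ (Fin d)) :=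
  if hB : B.PosSemidef then (stdGaussian d).map (fun x => Matrix.toEuclideanLin hB.sqrt x)
  else 0

/-- The positive semidefinite square root `B^{1/2}` of a positive semidefinite matrix. -/
def psdSqrt {d : ℕ} (B : Matrix (Fin d) (Fin d) ℝ) : Matrix (Fin d) (Fin d) ℝ :=
  if hB : B.PosSemidef then hB.sqrt else 0

/-!
Write `q A = ⟨A, T_μ A⟩ = ∫ ⟨A, xxᵀ⟩² dμ`. Since `⟨B, B⟩ = ∫ ⟨B, xxᵀ⟩ dμ`, Jensen's inequality gives
`‖B‖_F⁴ ≤ q B`, and expanding `B` in an orthonormal eigenbasis of `T_μ` gives `q B ≤ λ₁ ‖B‖_F²`.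
For the last inequality, `Σ λᵢ² = tr T_μ² = ∫ q (xxᵀ) dμ(x) = ∫∫ ⟨x, y⟩⁴ dμ(y) dμ(x)`, and the
`L⁴`-`L²` hypothesis bounds the inner integral by `β⁴ (∫ ⟨x, y⟩² dμ(y))² = β⁴ ⟨B, xxᵀ⟩²`, so
`Σ λᵢ² ≤ β⁴ q B ≤ β⁴ λ₁ ‖B‖_F² ≤ β⁴ (Σ λᵢ²)^{1/2} ‖B‖_F²`.
-/

lemma le_of_sq_le_mul {a c : ℝ} (hc : 0 ≤ c) (h : a ^ 2 ≤ c * a) : a ≤ c := by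
  nlinarith

lemma le_pow_four_mul_sq_of_rpow_le {I J β : ℝ} (hI : 0 ≤ I) (hJ : 0 ≤ J)
    (h : I ^ ((1 : ℝ) / 4) ≤ β * J ^ ((1 : ℝ) / 2)) : I ≤ β ^ 4 * J ^ 2 := by
  have habs : I ^ ((1 : ℝ) / 4) ≤ |β| * J ^ ((1 : ℝ) / 2) :=
    h.trans (mul_le_mul_of_nonneg_right (le_abs_self β) (by positivity))
  calc I = (I ^ ((1 : ℝ) / 4)) ^ 4 := by rw [← Real.rpow_mul_natCast hI]; norm_num
    _ ≤ (|β| * J ^ ((1 : ℝ) / 2)) ^ 4 := pow_le_pow_left₀ (by positivity) habs 4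
    _ = β ^ 4 * J ^ 2 := by
      rw [mul_pow, Even.pow_abs (by decide), ← Real.rpow_mul_natCast hJ]; norm_num

variable {d : ℕ} {μ : Measure (EuclideanSpace ℝ (Fin d))}

lemma minner_eq_sum (A M : Matrix (Fin d) (Fin d) ℝ) :
    minner A M = ∑ i, ∑ j, A i j * M j i := by
  simp only [minner, Matrix.trace, Matrix.diag, Matrix.mul_apply]

lemma minner_comm (A M : Matrix (Fin d) (Fin d) ℝ) : minner A M = minner M A :=
  Matrix.trace_mul_comm A M

lemma minner_smul_right (A M : Matrix (Fin d) (Fin d) ℝ) (c : ℝ) :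
    minner A (c • M) = c * minner A M := by
  rw [minner, Matrix.mul_smul, Matrix.trace_smul, smul_eq_mul, minner]

lemma minner_sum_smul_left {ι : Type*} (s : Finset ι) (c : ι → ℝ)
    (b : ι → Matrix (Fin d) (Fin d) ℝ) (M : Matrix (Fin d) (Fin d) ℝ) :
    minner (∑ i ∈ s, c i • b i) M = ∑ i ∈ s, c i * minner (b i) M := by
  simp only [minner, Finset.sum_mul, Matrix.trace_sum, Matrix.smul_mul, Matrix.trace_smul,
    smul_eq_mul]

lemma minner_self_eq_frobNorm_sq {A : Matrix (Fin d) (Fin d) ℝ} (hA : A.IsSymm) :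
    minner A A = frobNorm A ^ 2 := by
  rw [frobNorm, Real.sq_sqrt (by positivity), minner_eq_sum]
  simp only [hA.apply, sq]

lemma outer_isSymm (x : EuclideanSpace ℝ (Fin d)) : (outer x).IsSymm :=
  Matrix.IsSymm.ext fun _ _ => mul_comm _ _

lemma minner_outer_outer (x y : EuclideanSpace ℝ (Fin d)) :
    minner (outer x) (outer y) = ⟪x, y⟫ ^ 2 := by
  simp only [minner_eq_sum, outer, Matrix.of_apply, PiLp.inner_apply, RCLike.inner_apply,
    conj_trivial, sq, Finset.sum_mul_sum]
  exact Finset.sum_congr rfl fun i _ => Finset.sum_congr rfl fun j _ => by ring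

lemma memLp_two_apply_mul_apply (h4 : Integrable (fun x => ‖x‖ ^ 4) μ) (i j : Fin d) :
    MemLp (fun x : EuclideanSpace ℝ (Fin d) => x i * x j) 2 μ := by
  have hnorm : MemLp (fun x : EuclideanSpace ℝ (Fin d) => ‖x‖ ^ 2) 2 μ :=
    (memLp_two_iff_integrable_sq (by fun_prop)).2 (by simpa only [← pow_mul] using h4)
  refine hnorm.of_le (by fun_prop) (Filter.Eventually.of_forall fun x => ?_)
  simpa only [norm_mul, norm_pow, norm_norm, sq] using mul_le_mul (PiLp.norm_apply_le x i)
    (PiLp.norm_apply_le x j) (norm_nonneg _) (norm_nonneg _)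

lemma memLp_two_minner_outer (h4 : Integrable (fun x => ‖x‖ ^ 4) μ)
    (A : Matrix (Fin d) (Fin d) ℝ) : MemLp (fun x => minner A (outer x)) 2 μ := by
  simp only [minner_eq_sum, outer, Matrix.of_apply]
  exact memLp_finsetSum _ fun i _ => memLp_finsetSum _ fun j _ =>
    (memLp_two_apply_mul_apply h4 j i).const_mul _

lemma minner_mIntegral (A : Matrix (Fin d) (Fin d) ℝ)
    {F : EuclideanSpace ℝ (Fin d) → Matrix (Fin d) (Fin d) ℝ}
    (hF : ∀ i j, Integrable (fun x => F x i j) μ) :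
    minner A (mIntegral μ F) = ∫ x, minner A (F x) ∂μ := by
  have hAF : ∀ i j, Integrable (fun x => A i j * F x j i) μ := fun i j => (hF j i).const_mul _
  simp only [minner_eq_sum, mIntegral, Matrix.of_apply]
  rw [integral_finsetSum _ fun i _ => integrable_finsetSum _ fun j _ => hAF i j]
  refine Finset.sum_congr rfl fun i _ => ?_
  rw [integral_finsetSum _ fun j _ => hAF i j]
  exact Finset.sum_congr rfl fun j _ => (integral_const_mul _ _).symm

lemma minner_secondMoment [IsFiniteMeasure μ] (h4 : Integrable (fun x => ‖x‖ ^ 4) μ)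
    (A : Matrix (Fin d) (Fin d) ℝ) :
    minner A (secondMoment μ) = ∫ x, minner A (outer x) ∂μ :=
  minner_mIntegral A fun i j => (memLp_two_apply_mul_apply h4 i j).integrable one_le_two

lemma minner_fourthMomentOp (h4 : Integrable (fun x => ‖x‖ ^ 4) μ)
    (C A : Matrix (Fin d) (Fin d) ℝ) :
    minner C (fourthMomentOp μ A) = ∫ x, minner A (outer x) * minner C (outer x) ∂μ := by
  rw [fourthMomentOp, minner_mIntegral C fun i j => by
    simpa only [Pi.mul_def, Matrix.smul_apply, outer, Matrix.of_apply, smul_eq_mul] using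
      (memLp_two_minner_outer h4 A).integrable_mul (memLp_two_apply_mul_apply h4 i j)]
  simp only [minner_smul_right]

lemma minner_fourthMomentOp_comm (h4 : Integrable (fun x => ‖x‖ ^ 4) μ)
    (C A : Matrix (Fin d) (Fin d) ℝ) :
    minner C (fourthMomentOp μ A) = minner A (fourthMomentOp μ C) := by
  simp only [minner_fourthMomentOp h4, mul_comm]

lemma secondMoment_isSymm : (secondMoment μ).IsSymm :=
  Matrix.IsSymm.ext fun _ _ => by
    simp only [secondMoment, mIntegral, outer, Matrix.of_apply, mul_comm]

lemma minner_secondMoment_outer [IsFiniteMeasure μ] (h4 : Integrable (fun x => ‖x‖ ^ 4) μ)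
    (v : EuclideanSpace ℝ (Fin d)) :
    minner (secondMoment μ) (outer v) = ∫ x, ⟪x, v⟫ ^ 2 ∂μ := by
  rw [minner_comm, minner_secondMoment h4]
  simp only [minner_outer_outer, real_inner_comm v]

lemma minner_outer_fourthMomentOp_outer (h4 : Integrable (fun x => ‖x‖ ^ 4) μ)
    (v : EuclideanSpace ℝ (Fin d)) :
    minner (outer v) (fourthMomentOp μ (outer v)) = ∫ x, |⟪x, v⟫| ^ 4 ∂μ := by
  rw [minner_fourthMomentOp h4]
  refine integral_congr_ae (Filter.Eventually.of_forall fun x => ?_)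
  simp only [minner_outer_outer, real_inner_comm v, Even.pow_abs (by decide : Even 4)]
  ring

lemma sq_minner_secondMoment_le [IsProbabilityMeasure μ] (h4 : Integrable (fun x => ‖x‖ ^ 4) μ)
    (A : Matrix (Fin d) (Fin d) ℝ) :
    minner A (secondMoment μ) ^ 2 ≤ minner A (fourthMomentOp μ A) := by
  have hvar := ProbabilityTheory.variance_nonneg (fun x => minner A (outer x)) μ
  rw [ProbabilityTheory.variance_eq_sub (memLp_two_minner_outer h4 A)] at hvar
  rw [minner_secondMoment h4, minner_fourthMomentOp h4]
  simp only [Pi.pow_apply, sq] at hvar ⊢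
  linarith

lemma minner_outer_fourthMomentOp_outer_le [IsFiniteMeasure μ]
    (h4 : Integrable (fun x => ‖x‖ ^ 4) μ) {β : ℝ}
    {v : EuclideanSpace ℝ (Fin d)}
    (hv : (∫ x, |⟪x, v⟫| ^ 4 ∂μ) ^ ((1 : ℝ) / 4) ≤ β * (∫ x, ⟪x, v⟫ ^ 2 ∂μ) ^ ((1 : ℝ) / 2)) :
    minner (outer v) (fourthMomentOp μ (outer v)) ≤
      β ^ 4 * minner (secondMoment μ) (outer v) ^ 2 := by
  rw [minner_outer_fourthMomentOp_outer h4, minner_secondMoment_outer h4]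
  exact le_pow_four_mul_sq_of_rpow_le (integral_nonneg fun _ => by positivity)
    (integral_nonneg fun _ => sq_nonneg _) hv

lemma integral_minner_outer_fourthMomentOp_outer_le [IsFiniteMeasure μ]
    (h4 : Integrable (fun x => ‖x‖ ^ 4) μ) {β : ℝ}
    (hl4l2 : ∀ v : EuclideanSpace ℝ (Fin d),
      (∫ x, |⟪x, v⟫| ^ 4 ∂μ) ^ ((1 : ℝ) / 4) ≤ β * (∫ x, ⟪x, v⟫ ^ 2 ∂μ) ^ ((1 : ℝ) / 2)) :
    ∫ x, minner (outer x) (fourthMomentOp μ (outer x)) ∂μ ≤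
      β ^ 4 * minner (secondMoment μ) (fourthMomentOp μ (secondMoment μ)) := by
  have hB := memLp_two_minner_outer h4 (secondMoment μ)
  rw [minner_fourthMomentOp h4 (secondMoment μ), ← integral_const_mul]
  refine integral_mono_of_nonneg (Filter.Eventually.of_forall fun x => ?_)
    ((hB.integrable_mul hB).const_mul _) (Filter.Eventually.of_forall fun x => ?_)
  · simp only [Pi.zero_apply, minner_outer_fourthMomentOp_outer h4]
    exact integral_nonneg fun _ => by positivity
  · simpa only [sq] using minner_outer_fourthMomentOp_outer_le h4 (hl4l2 x)

section Eigenbasis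
variable {ι : Type*} [Fintype ι] [DecidableEq ι] {b : ι → Matrix (Fin d) (Fin d) ℝ}

lemma minner_eq_sum_mul_of_mem_span
    (horth : ∀ i j, minner (b i) (b j) = if i = j then 1 else 0)
    {A : Matrix (Fin d) (Fin d) ℝ} (hA : A ∈ Submodule.span ℝ (Set.range b))
    (C : Matrix (Fin d) (Fin d) ℝ) :
    minner A C = ∑ i, minner A (b i) * minner (b i) C := by
  obtain ⟨c, rfl⟩ := (Submodule.mem_span_range_iff_exists_fun ℝ).mp hA
  have hc : ∀ j, minner (∑ i, c i • b i) (b j) = c j := fun j => by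
    simp [minner_sum_smul_left, horth]
  simp only [minner_sum_smul_left, hc]

lemma eigenvalue_eq_integral_sq (h4 : Integrable (fun x => ‖x‖ ^ 4) μ)
    {v : Matrix (Fin d) (Fin d) ℝ} {c : ℝ} (hv : minner v v = 1)
    (heig : fourthMomentOp μ v = c • v) :
    c = ∫ x, minner v (outer x) ^ 2 ∂μ := by
  have h := minner_fourthMomentOp h4 v v
  rw [heig, minner_smul_right, hv, mul_one] at h
  simpa only [sq] using h

variable {lam : ι → ℝ}

lemma minner_fourthMomentOp_self_eq_sum (h4 : Integrable (fun x => ‖x‖ ^ 4) μ)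
    (horth : ∀ i j, minner (b i) (b j) = if i = j then 1 else 0)
    (heig : ∀ i, fourthMomentOp μ (b i) = lam i • b i)
    {A : Matrix (Fin d) (Fin d) ℝ}
    (hA : A ∈ Submodule.span ℝ (Set.range b)) :
    minner A (fourthMomentOp μ A) = ∑ i, lam i * minner A (b i) ^ 2 := by
  rw [minner_eq_sum_mul_of_mem_span horth hA]
  refine Finset.sum_congr rfl fun i _ => ?_
  rw [minner_fourthMomentOp_comm h4, heig i, minner_smul_right]
  ring

lemma minner_fourthMomentOp_self_le (h4 : Integrable (fun x => ‖x‖ ^ 4) μ)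
    (horth : ∀ i j, minner (b i) (b j) = if i = j then 1 else 0)
    (heig : ∀ i, fourthMomentOp μ (b i) = lam i • b i)
    {L : ℝ} (hL : ∀ i, lam i ≤ L) {A : Matrix (Fin d) (Fin d) ℝ}
    (hA : A ∈ Submodule.span ℝ (Set.range b)) :
    minner A (fourthMomentOp μ A) ≤ L * minner A A := by
  rw [minner_fourthMomentOp_self_eq_sum h4 horth heig hA, minner_eq_sum_mul_of_mem_span horth hA,
    Finset.mul_sum]
  refine Finset.sum_le_sum fun i _ => ?_
  rw [minner_comm (b i), ← sq]
  exact mul_le_mul_of_nonneg_right (hL i) (sq_nonneg _)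

lemma sum_sq_eigenvalues_eq_integral (h4 : Integrable (fun x => ‖x‖ ^ 4) μ)
    (horth : ∀ i j, minner (b i) (b j) = if i = j then 1 else 0)
    (heig : ∀ i, fourthMomentOp μ (b i) = lam i • b i)
    (hspan : ∀ A : Matrix (Fin d) (Fin d) ℝ, A.IsSymm → A ∈ Submodule.span ℝ (Set.range b)) :
    ∑ i, lam i ^ 2 = ∫ x, minner (outer x) (fourthMomentOp μ (outer x)) ∂μ := by
  have hint : ∀ i, Integrable (fun x => lam i * minner (b i) (outer x) ^ 2) μ := fun i =>
    (memLp_two_minner_outer h4 (b i)).integrable_sq.const_mul _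
  calc ∑ i, lam i ^ 2 = ∑ i, ∫ x, lam i * minner (b i) (outer x) ^ 2 ∂μ := by
        refine Finset.sum_congr rfl fun i _ => ?_
        rw [integral_const_mul, ← eigenvalue_eq_integral_sq h4 (by simp [horth]) (heig i), sq]
    _ = ∫ x, ∑ i, lam i * minner (b i) (outer x) ^ 2 ∂μ :=
        (integral_finsetSum _ fun i _ => hint i).symm
    _ = ∫ x, minner (outer x) (fourthMomentOp μ (outer x)) ∂μ := by
        refine integral_congr_ae (Filter.Eventually.of_forall fun x => ?_)
        simp only [minner_fourthMomentOp_self_eq_sum h4 horth heig (hspan _ (outer_isSymm x)),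
          minner_comm (b _)]

end Eigenbasis

lemma IsEigenSeq.nonneg (h4 : Integrable (fun x => ‖x‖ ^ 4) μ) {lam : ℕ → ℝ}
    (hlam : IsEigenSeq μ lam) (n : ℕ) : 0 ≤ lam n := by
  obtain ⟨-, hzero, b, -, horth, -, heig⟩ := hlam
  by_cases hn : n < d * (d + 1) / 2
  · rw [eigenvalue_eq_integral_sq (v := b ⟨n, hn⟩) h4 (by simp [horth]) (heig ⟨n, hn⟩)]
    exact integral_nonneg fun _ => sq_nonneg _
  · exact (hzero n (not_lt.1 hn)).ge

lemma IsEigenSeq.sq_le_sum_sq {lam : ℕ → ℝ} (hlam : IsEigenSeq μ lam) (n : ℕ) :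
    lam n ^ 2 ≤ ∑ i : Fin (d * (d + 1) / 2), lam i ^ 2 := by
  by_cases hn : n < d * (d + 1) / 2
  · exact Finset.single_le_sum (f := fun i : Fin (d * (d + 1) / 2) => lam i ^ 2)
      (fun i _ => sq_nonneg _) (Finset.mem_univ ⟨n, hn⟩)
  · rw [hlam.2.1 n (not_lt.1 hn), sq, zero_mul]
    exact Finset.sum_nonneg fun i _ => sq_nonneg _

theorem largest_eigenvalue_frobenius_general
    (d : ℕ) (μ : Measure (EuclideanSpace ℝ (Fin d)))
    [IsProbabilityMeasure μ] (h4 : Integrable (fun x => ‖x‖ ^ 4) μ)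
    (β : ℝ)
    (hl4l2 : ∀ v : EuclideanSpace ℝ (Fin d),
      (∫ x, (|⟪x, v⟫|) ^ 4 ∂μ) ^ ((1 : ℝ) / 4) ≤
        β * (∫ x, ⟪x, v⟫ ^ 2 ∂μ) ^ ((1 : ℝ) / 2))
    (lam : ℕ → ℝ) (hlam : IsEigenSeq μ lam) :
    frobNorm (secondMoment μ) ^ 2 ≤ lam 0 ∧
      lam 0 ≤ (∑ i : Fin (d * (d + 1) / 2), lam i ^ 2) ^ ((1 : ℝ) / 2) ∧
      (∑ i : Fin (d * (d + 1) / 2), lam i ^ 2) ^ ((1 : ℝ) / 2) ≤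
        β ^ 4 * frobNorm (secondMoment μ) ^ 2 := by
  have hlam0 := hlam.nonneg h4 0
  have hroot : lam 0 ≤ √(∑ i : Fin (d * (d + 1) / 2), lam i ^ 2) :=
    Real.le_sqrt_of_sq_le (hlam.sq_le_sum_sq 0)
  obtain ⟨hanti, -, b, -, horth, hspan, heig⟩ := hlam
  set B := secondMoment μ
  set S := ∑ i : Fin (d * (d + 1) / 2), lam i ^ 2
  have hBB : minner B B = frobNorm B ^ 2 := minner_self_eq_frobNorm_sq secondMoment_isSymm
  have hjensen : (frobNorm B ^ 2) ^ 2 ≤ minner B (fourthMomentOp μ B) :=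
    hBB ▸ sq_minner_secondMoment_le h4 B
  have hTB : minner B (fourthMomentOp μ B) ≤ lam 0 * frobNorm B ^ 2 := hBB ▸
    minner_fourthMomentOp_self_le h4 horth heig (fun i => hanti (Nat.zero_le i))
      (hspan B secondMoment_isSymm)
  have hS : S ≤ β ^ 4 * minner B (fourthMomentOp μ B) :=
    (sum_sq_eigenvalues_eq_integral h4 horth heig hspan).trans_le
      (integral_minner_outer_fourthMomentOp_outer_le h4 hl4l2)
  rw [← Real.sqrt_eq_rpow]
  refine ⟨le_of_sq_le_mul hlam0 (hjensen.trans hTB), hroot,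
    le_of_sq_le_mul (by positivity : 0 ≤ β ^ 4 * frobNorm B ^ 2) ?_⟩
  calc √S ^ 2 = S := Real.sq_sqrt (Finset.sum_nonneg fun i _ => sq_nonneg _)
    _ ≤ β ^ 4 * minner B (fourthMomentOp μ B) := hS
    _ ≤ β ^ 4 * (lam 0 * frobNorm B ^ 2) := by gcongr
    _ ≤ β ^ 4 * (√S * frobNorm B ^ 2) := by gcongr
    _ = β ^ 4 * frobNorm B ^ 2 * √S := by ring

/-- under `L⁴`-`L²` equivalence with constant `β`,
`‖B‖_F² ≤ λ₁(T_μ) ≤ (Σ λᵢ(T_μ)²)^{1/2} ≤ β⁴ ‖B‖_F²`. -/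
theorem largest_eigenvalue_frobenius
    (d : ℕ) (hd : 1 ≤ d) (μ : Measure (EuclideanSpace ℝ (Fin d)))
    [IsProbabilityMeasure μ] (h4 : Integrable (fun x => ‖x‖ ^ 4) μ)
    (β : ℝ) (hβ : 1 ≤ β)
    (hl4l2 : ∀ v : EuclideanSpace ℝ (Fin d),
      (∫ x, (|⟪x, v⟫|) ^ 4 ∂μ) ^ ((1 : ℝ) / 4) ≤
        β * (∫ x, ⟪x, v⟫ ^ 2 ∂μ) ^ ((1 : ℝ) / 2))
    (lam : ℕ → ℝ) (hlam : IsEigenSeq μ lam) :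
    frobNorm (secondMoment μ) ^ 2 ≤ lam 0 ∧
      lam 0 ≤ (∑ i : Fin (d * (d + 1) / 2), lam i ^ 2) ^ ((1 : ℝ) / 2) ∧
      (∑ i : Fin (d * (d + 1) / 2), lam i ^ 2) ^ ((1 : ℝ) / 2) ≤
        β ^ 4 * frobNorm (secondMoment μ) ^ 2 :=
  largest_eigenvalue_frobenius_general d μ h4 β hl4l2 lam hlam

end
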